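/- Let v > 0 and set τ_s = 1/(2v). Let m ∈ (0,1), let K(m) = ∫₀^{π/2} (1 − m²sin²θ)^{−1/2} dθ and E(m) = ∫₀^{π/2} (1 − m²sin²θ)^{1/2} dθ, define b(m) = (1 − m²)/m² − E(m)/(m²K(m)), H₁(m) = (18m⁴/(1 − m² + m⁴))^{1/2}, H₂(m) = (H₁(m)³/(162m⁶))·(−2 + 3m² + 3m⁴ − 2m⁶), H₃(m) = (H₁(m)/(3m²))·(3E(m)/K(m) + m² − 2), and ρ̄(m) = (H₁(m)/(m²K(m)²))·(3H₂(m) + 2H₃(m))/(3H₂(m)H₃(m) + 4), and assume ρ̄(m) ≠ 0. Let N, n be positive reals, let τ < τ_s, set P = (N/(2n))·√(12(τ_s − τ)), set λ = ν = 1, μ = −√(3v/2), γ = (3/2)√(3/(2v)), η = (1/2)√(3/(2v)), κ = (K(m)/P)⁴·144·(m⁴ − m² + 1)/18 and a = √κ·H₁(m). If a real number s₁ satisfies both s₁ = (180/(7ρ̄(m)))·(1/P²)·(γ/η − 2λ/ν) − 3μ/η and s₁ = −6·(a·b(m) + (a/(3m²))·(3E(m)/K(m) + m² − 2)), then τ =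 (2n²/(3N²v))·(15/(7ρ̄(m)) + 6m²K(m)²·(b(m) + (1/(3m²))·(3E(m)/K(m) + m² − 2))) + 1/(2v). -/

import Mathlib

/-!
With the OV coefficients one has `γ/η = 3` and `μ/η = -2v`, and the amplitude `a = √κ H₁`
collapses to `12 K² m² / P²`. Both conditions then express `s₁ P²` linearly, and equating them
gives `v P² = -2 (15/(7ρ̄) + 6 m² K² B)` with `B = b + (3E/K + m² - 2)/(3m²)`. Since the
periodicity condition reads `P² = 3 N² (τ_s - τ) / n²`, this is an affine equation for `τ`.
-/

open Real

lemma sq_halfPeriod_mul {N n d : ℝ} (hn : n ≠ 0) (hd : 0 ≤ d) :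
    n ^ 2 * ((N / (2 * n)) * √(12 * d)) ^ 2 = 3 * N ^ 2 * d := by
  rw [mul_pow, sq_sqrt (by positivity)]
  field_simp
  ring

lemma sqrt_kappa_mul_H1 (K P m : ℝ) :
    √((K / P) ^ 4 * 144 * (m ^ 4 - m ^ 2 + 1) / 18) *
        (18 * m ^ 4 / (1 - m ^ 2 + m ^ 4)) ^ ((1 : ℝ) / 2) =
      12 * K ^ 2 * m ^ 2 / P ^ 2 := by
  have hpos : 0 < m ^ 4 - m ^ 2 + 1 := by nlinarith [sq_nonneg (m ^ 2 - 1 / 2)]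
  have hratio : (m ^ 4 - m ^ 2 + 1) / (1 - m ^ 2 + m ^ 4) = 1 := by
    rw [show 1 - m ^ 2 + m ^ 4 = m ^ 4 - m ^ 2 + 1 by ring, div_self hpos.ne']
  have hsq : (K / P) ^ 4 * 144 * (m ^ 4 - m ^ 2 + 1) / 18 * (18 * m ^ 4 / (1 - m ^ 2 + m ^ 4)) =
      (12 * K ^ 2 * m ^ 2 / P ^ 2) ^ 2 := by
    calc _ = (K / P) ^ 4 * 144 * m ^ 4 * ((m ^ 4 - m ^ 2 + 1) / (1 - m ^ 2 + m ^ 4)) := by ring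
      _ = _ := by rw [hratio]; ring
  rw [← sqrt_eq_rpow, ← sqrt_mul (by positivity), hsq, sqrt_sq (by positivity)]

lemma sqrt_three_mul_div_two {v : ℝ} (hv : 0 < v) : √(3 * v / 2) = v * √(3 / (2 * v)) := by
  rw [show 3 * v / 2 = v ^ 2 * (3 / (2 * v)) by field_simp, sqrt_mul (sq_nonneg v), sqrt_sq hv.le]

lemma ov_constant_modulus_condition {v : ℝ} (hv : 0 < v) (c P : ℝ) :
    c * (1 / P ^ 2) * ((3 / 2) * √(3 / (2 * v)) / ((1 / 2) * √(3 / (2 * v))) - 2 * 1 / 1) -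
        3 * -√(3 * v / 2) / ((1 / 2) * √(3 / (2 * v))) =
      c / P ^ 2 + 6 * v := by
  have hs : √(3 / (2 * v)) ≠ 0 := (sqrt_pos.mpr (by positivity)).ne'
  rw [sqrt_three_mul_div_two hv]
  field_simp
  ring

theorem stmt_19 (v : ℝ) (hv : 0 < v) (tau_s : ℝ) (htau_s : tau_s = 1 / (2 * v))
    (m : ℝ)
    (K E b H1 rhobar : ℝ)
    (hH1 : H1 = (18 * m ^ 4 / (1 - m ^ 2 + m ^ 4)) ^ ((1 : ℝ) / 2))
    (N n tau P lam nu mu gam eta kappa a : ℝ)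
    (hN : 0 < N) (hn : 0 < n) (htau : tau < tau_s)
    (hP : P = (N / (2 * n)) * Real.sqrt (12 * (tau_s - tau)))
    (hlam : lam = 1) (hnu : nu = 1)
    (hmu : mu = -Real.sqrt (3 * v / 2))
    (hgam : gam = (3 / 2) * Real.sqrt (3 / (2 * v)))
    (heta : eta = (1 / 2) * Real.sqrt (3 / (2 * v)))
    (hkappa : kappa = (K / P) ^ 4 * 144 * (m ^ 4 - m ^ 2 + 1) / 18)
    (ha : a = Real.sqrt kappa * H1)
    (s1 : ℝ)
    (hs1a : s1 = (180 / (7 * rhobar)) * (1 / P ^ 2) *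
      (gam / eta - 2 * lam / nu) - 3 * mu / eta)
    (hs1b : s1 = -6 * (a * b + (a / (3 * m ^ 2)) * (3 * E / K + m ^ 2 - 2))) :
    tau = (2 * n ^ 2 / (3 * N ^ 2 * v)) *
        (15 / (7 * rhobar) + 6 * m ^ 2 * K ^ 2 *
          (b + (1 / (3 * m ^ 2)) * (3 * E / K + m ^ 2 - 2))) +
      1 / (2 * v) := by
  subst htau_s hH1 hkappa hlam hnu hmu hgam heta
  rw [sqrt_kappa_mul_H1] at ha
  rw [ov_constant_modulus_condition hv] at hs1a
  have hd : 0 < 1 / (2 * v) - tau := by linarith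
  have hPpos : 0 < P := hP ▸ by positivity
  have hgap : 1 / (2 * v) - tau = n ^ 2 * P ^ 2 / (3 * N ^ 2) := by
    rw [eq_div_iff (by positivity), hP, sq_halfPeriod_mul hn.ne' hd.le]
    ring
  have hs1 : s1 = -6 * a * (b + (1 / (3 * m ^ 2)) * (3 * E / K + m ^ 2 - 2)) := by
    rw [hs1b]; ring
  -- keep `field_simp` from clearing the denominators `m` and `K` inside `B`
  generalize b + (1 / (3 * m ^ 2)) * (3 * E / K + m ^ 2 - 2) = B at hs1 ⊢
  have hP2 : P ^ 2 = -2 * (15 / (7 * rhobar) + 6 * m ^ 2 * K ^ 2 * B) / v := by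
    rw [hs1a, ha] at hs1
    field_simp at hs1
    rw [eq_div_iff hv.ne']
    linear_combination hs1 / 42
  rw [show tau = 1 / (2 * v) - n ^ 2 * P ^ 2 / (3 * N ^ 2) by linear_combination -hgap, hP2]
  ring
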